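/- arXiv:2409.19087 — 2 statements merged into one kernel-verified Lean document; each statement's English description precedes it below -/
import Mathlib

section
/- Let k, m, n be positive integers with k dividing m, k < m, and n ≥ 2. Define the m×n matrix A by: A_{j,1} = 1/√k for 1 ≤ j ≤ k and A_{j,1} = 0 for k < j ≤ m; and A_{j,i} = 1/√m for every i with 2 ≤ i ≤ n and every j ∈ [m]. Then A has rank 2 and A is m/(2k)-incoherent (the coherence of its column space equals m/(2k)). -/
open scoped BigOperators

/-- The coherence `μ(U)` of a subspace `U` of `ℝ^m`:
`μ(U) = (m / dim U) · max_{j ∈ [m]} ‖P_U e_j‖₂²`. -/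
noncomputable def coherence {m : ℕ} (U : Submodule ℝ (EuclideanSpace ℝ (Fin m))) : ℝ :=
  ((m : ℝ) / (Module.finrank ℝ U : ℝ)) *
    ⨆ j : Fin m,
      ‖(U.orthogonalProjectionOnto (EuclideanSpace.single j 1) : EuclideanSpace ℝ (Fin m))‖ ^ 2

/-- The column space of an `m × n` real matrix, as a subspace of `ℝ^m`. -/
noncomputable def colSpace {m n : ℕ} (A : Matrix (Fin m) (Fin n) ℝ) :
    Submodule ℝ (EuclideanSpace ℝ (Fin m)) :=
  Submodule.span ℝ (Set.range fun i : Fin n => (EuclideanSpace.equiv (Fin m) ℝ).symm fun j => A j i)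

/-!
The column space is spanned by the indicator vectors `1_s` and `1_sᶜ` of the first `k`
coordinates and of the remaining `m - k`: the first column is `1_s / √k` and every other
column is `(1_s + 1_sᶜ) / √m`. The normalized indicators `1_s / √k`, `1_sᶜ / √(m - k)` form
an orthonormal basis of it, so the rank is `2` and `‖P e_j‖²`, the sum of the squared inner
products of `e_j` with that basis, is `1 / k` on `s` and `1 / (m - k)` off it. Since `k ∣ m`
and `k < m`, `k ≤ m - k`, so the maximum is `1 / k` and the coherence is `(m / 2) · (1 / k)`.
-/

open scoped RealInnerProductSpace
open Finset Submodule Function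

theorem Orthonormal.norm_sq_orthogonalProjectionOnto_span {E κ : Type*} [NormedAddCommGroup E]
    [InnerProductSpace ℝ E] [Fintype κ] {v : κ → E} (hv : Orthonormal ℝ v)
    [(span ℝ (Set.range v)).HasOrthogonalProjection] (x : E) :
    ‖((span ℝ (Set.range v)).orthogonalProjectionOnto x : E)‖ ^ 2 = ∑ i, ⟪v i, x⟫ ^ 2 := by
  let b := (Module.Basis.span hv.linearIndependent).toOrthonormalBasis <| by
    rw [← (span ℝ (Set.range v)).subtypeₗᵢ.orthonormal_comp_iff]
    convert hv
    funext i
    simp [Module.Basis.span_apply]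
  rw [norm_coe, ← b.sum_sq_inner_right]
  refine Finset.sum_congr rfl fun i _ => ?_
  rw [inner_orthogonalProjectionOnto_eq_of_mem_left]
  simp [b, Module.Basis.span_apply]

theorem span_pair_smul_smul {R M : Type*} [Ring R] [AddCommGroup M] [Module R M] {a b : R}
    (ha : IsUnit a) (hb : IsUnit b) (x y : M) : span R {a • x, b • y} = span R {x, y} := by
  rw [span_insert, span_insert, span_singleton_smul_eq ha, span_singleton_smul_eq hb]

theorem span_pair_add_right {R M : Type*} [Ring R] [AddCommGroup M] [Module R M] (x y : M) :
    span R {x, x + y} = span R {x, y} := by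
  apply le_antisymm <;> rw [span_le, Set.insert_subset_iff, Set.singleton_subset_iff] <;>
    refine ⟨subset_span (by simp), ?_⟩
  · exact add_mem (subset_span (by simp)) (subset_span (by simp))
  · simpa using sub_mem (subset_span (by simp) : x + y ∈ span R {x, x + y})
      (subset_span (by simp) : x ∈ span R {x, x + y})

section Indicator

variable {ι : Type*} [DecidableEq ι]

noncomputable section

def indicatorVec (s : Finset ι) : EuclideanSpace ℝ ι :=
  WithLp.toLp 2 fun j => if j ∈ s then 1 else 0

def unitIndicatorVec (s : Finset ι) : EuclideanSpace ℝ ι :=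
  (√(#s : ℝ))⁻¹ • indicatorVec s

end

@[simp]
theorem indicatorVec_apply (s : Finset ι) (j : ι) :
    indicatorVec s j = if j ∈ s then 1 else 0 := rfl

theorem span_range_unitIndicatorVec_pair {s t : Finset ι} (hs : s.Nonempty) (ht : t.Nonempty) :
    span ℝ (Set.range fun i => unitIndicatorVec (![s, t] i)) =
      span ℝ {indicatorVec s, indicatorVec t} := by
  have hunit : ∀ u : Finset ι, u.Nonempty → IsUnit (√(#u : ℝ))⁻¹ := fun u hu =>
    (inv_pos.mpr (Real.sqrt_pos.mpr (by exact_mod_cast hu.card_pos))).ne'.isUnit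
  rw [show (fun i => unitIndicatorVec (![s, t] i)) = unitIndicatorVec ∘ ![s, t] from rfl,
    Set.range_comp, Matrix.range_cons_cons_empty, Set.image_pair]
  exact span_pair_smul_smul (hunit s hs) (hunit t ht) _ _

variable [Fintype ι]

theorem inner_indicatorVec_indicatorVec (s t : Finset ι) :
    ⟪indicatorVec s, indicatorVec t⟫ = #(s ∩ t) := by
  simp only [PiLp.inner_apply, indicatorVec_apply, RCLike.inner_apply, conj_trivial, mul_ite,
    mul_one, mul_zero, ← ite_and, Finset.sum_boole]
  congr 2
  ext
  simp

theorem inner_indicatorVec_single (s : Finset ι) (j : ι) :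
    ⟪indicatorVec s, EuclideanSpace.single j 1⟫ = if j ∈ s then 1 else 0 := by
  simp [EuclideanSpace.inner_single_right]

theorem orthonormal_unitIndicatorVec {κ : Type*} {S : κ → Finset ι}
    (hS : Pairwise (Disjoint on S)) (hne : ∀ i, (S i).Nonempty) :
    Orthonormal ℝ fun i => unitIndicatorVec (S i) := by
  classical
  rw [orthonormal_iff_ite]
  intro i j
  simp only [unitIndicatorVec, real_inner_smul_left, real_inner_smul_right,
    inner_indicatorVec_indicatorVec]
  split_ifs with h
  · subst h
    have : (0 : ℝ) < #(S i) := by exact_mod_cast (hne i).card_pos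
    field_simp
    simp [Real.sq_sqrt this.le]
  · simp [disjoint_iff_inter_eq_empty.mp (hS h)]

theorem norm_sq_orthogonalProjectionOnto_single_span_unitIndicatorVec {κ : Type*} [Fintype κ]
    {S : κ → Finset ι} (hS : Pairwise (Disjoint on S)) (hne : ∀ i, (S i).Nonempty) (j : ι) :
    ‖((span ℝ (Set.range fun i => unitIndicatorVec (S i))).orthogonalProjectionOnto
        (EuclideanSpace.single j 1) : EuclideanSpace ℝ ι)‖ ^ 2 =
      ∑ i, if j ∈ S i then (#(S i) : ℝ)⁻¹ else 0 := by
  rw [(orthonormal_unitIndicatorVec hS hne).norm_sq_orthogonalProjectionOnto_span]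
  refine Finset.sum_congr rfl fun i _ => ?_
  rw [unitIndicatorVec, real_inner_smul_left, inner_indicatorVec_single]
  split_ifs
  · rw [mul_one, inv_pow, Real.sq_sqrt (Nat.cast_nonneg _)]
  · simp

theorem pairwise_disjoint_pair_compl (s : Finset ι) : Pairwise (Disjoint on ![s, sᶜ]) := by
  intro i j hij
  fin_cases i <;> fin_cases j <;> simp_all [onFun, disjoint_compl_left, disjoint_compl_right]

theorem finrank_span_indicatorVec_compl {s : Finset ι} (hs : s.Nonempty) (hsc : sᶜ.Nonempty) :
    Module.finrank ℝ (span ℝ {indicatorVec s, indicatorVec sᶜ}) = 2 := by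
  have hne : ∀ i, (![s, sᶜ] i).Nonempty := Fin.forall_fin_two.mpr ⟨hs, hsc⟩
  have hv := orthonormal_unitIndicatorVec (pairwise_disjoint_pair_compl s) hne
  rw [← span_range_unitIndicatorVec_pair hs hsc, finrank_span_eq_card hv.linearIndependent,
    Fintype.card_fin]

theorem norm_sq_orthogonalProjectionOnto_single_span_indicatorVec_compl {s : Finset ι}
    (hs : s.Nonempty) (hsc : sᶜ.Nonempty) (j : ι) :
    ‖((span ℝ {indicatorVec s, indicatorVec sᶜ}).orthogonalProjectionOnto
        (EuclideanSpace.single j 1) : EuclideanSpace ℝ ι)‖ ^ 2 =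
      if j ∈ s then (#s : ℝ)⁻¹ else (#sᶜ : ℝ)⁻¹ := by
  have hne : ∀ i, (![s, sᶜ] i).Nonempty := Fin.forall_fin_two.mpr ⟨hs, hsc⟩
  rw [← span_range_unitIndicatorVec_pair hs hsc,
    norm_sq_orthogonalProjectionOnto_single_span_unitIndicatorVec
      (pairwise_disjoint_pair_compl s) hne]
  by_cases hj : j ∈ s <;> simp [hj]

end Indicator

theorem coherence_span_indicatorVec_compl {m : ℕ} {s : Finset (Fin m)} (hs : s.Nonempty)
    (hsc : #s ≤ #sᶜ) : coherence (span ℝ {indicatorVec s, indicatorVec sᶜ}) = m / (2 * #s) := by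
  have hsc' : sᶜ.Nonempty := card_pos.mp (hs.card_pos.trans_le hsc)
  have hsup : ⨆ j : Fin m, ‖((span ℝ {indicatorVec s, indicatorVec sᶜ}).orthogonalProjectionOnto
      (EuclideanSpace.single j 1) : EuclideanSpace ℝ (Fin m))‖ ^ 2 = (#s : ℝ)⁻¹ := by
    have hpos : (0 : ℝ) < #s := by exact_mod_cast hs.card_pos
    simp_rw [norm_sq_orthogonalProjectionOnto_single_span_indicatorVec_compl hs hsc']
    obtain ⟨j₀, hj₀⟩ := hs
    have : Nonempty (Fin m) := ⟨j₀⟩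
    refine le_antisymm (ciSup_le fun j => ?_)
      (le_ciSup_of_le (Set.finite_range _).bddAbove j₀ (by simp [hj₀]))
    split_ifs
    · exact le_rfl
    · exact inv_anti₀ hpos (by exact_mod_cast hsc)
  rw [coherence, finrank_span_indicatorVec_compl hs hsc', hsup]
  field_simp
  norm_num

theorem rank_eq_finrank_colSpace {m n : ℕ} (A : Matrix (Fin m) (Fin n) ℝ) :
    A.rank = Module.finrank ℝ (colSpace A) := by
  rw [Matrix.rank_eq_finrank_span_cols, colSpace,
    ← LinearEquiv.finrank_map_eq (EuclideanSpace.equiv (Fin m) ℝ).toLinearEquiv, map_span,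
    ← Set.range_comp]
  rfl

theorem colSpace_eq_span_indicatorVec_compl {m n : ℕ} (hn : 2 ≤ n) {s : Finset (Fin m)}
    {a b : ℝ} (ha : a ≠ 0) (hb : b ≠ 0) (A : Matrix (Fin m) (Fin n) ℝ)
    (hA1 : ∀ (j : Fin m) (i : Fin n), (i : ℕ) = 0 → A j i = if j ∈ s then a else 0)
    (hA2 : ∀ (j : Fin m) (i : Fin n), (i : ℕ) ≠ 0 → A j i = b) :
    colSpace A = span ℝ {indicatorVec s, indicatorVec sᶜ} := by
  set col := fun i : Fin n => (EuclideanSpace.equiv (Fin m) ℝ).symm fun j => A j i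
  have hcol₀ : ∀ i : Fin n, (i : ℕ) = 0 → col i = a • indicatorVec s := by
    intro i hi
    ext j
    simp [col, hA1 j i hi]
  have hcol : ∀ i : Fin n, (i : ℕ) ≠ 0 → col i = b • (indicatorVec s + indicatorVec sᶜ) := by
    intro i hi
    ext j
    by_cases hj : j ∈ s <;> simp [col, hA2 j i hi, hj]
  have hrange : Set.range col = {a • indicatorVec s, b • (indicatorVec s + indicatorVec sᶜ)} := by
    apply subset_antisymm
    · rintro _ ⟨i, rfl⟩
      by_cases hi : (i : ℕ) = 0
      · exact Or.inl (hcol₀ i hi)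
      · exact Or.inr (hcol i hi)
    · rintro _ (rfl | rfl)
      · exact ⟨⟨0, by omega⟩, hcol₀ _ rfl⟩
      · exact ⟨⟨1, by omega⟩, hcol _ one_ne_zero⟩
  change span ℝ (Set.range col) = _
  rw [hrange, span_pair_smul_smul ha.isUnit hb.isUnit, span_pair_add_right]

/-- **Lemma 3.2.** Let `k ∣ m`, `k < m`, `n ≥ 2`. The `m × n` matrix whose first column is
`1/√k` on the first `k` rows and `0` elsewhere, and whose remaining `n − 1` columns are the
uniform vector `1/√m`, has rank `2` and its column space has coherence exactly `m/(2k)`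
(it is `m/(2k)`-incoherent). -/
theorem two_center_matrix_rank_and_incoherence {k m n : ℕ}
    (hk : 0 < k) (hdvd : k ∣ m) (hkm : k < m) (hn : 2 ≤ n)
    (A : Matrix (Fin m) (Fin n) ℝ)
    (hA1 : ∀ (j : Fin m) (i : Fin n), (i : ℕ) = 0 →
      A j i = if (j : ℕ) < k then 1 / Real.sqrt k else 0)
    (hA2 : ∀ (j : Fin m) (i : Fin n), (i : ℕ) ≠ 0 → A j i = 1 / Real.sqrt m) :
    A.rank = 2 ∧ coherence (colSpace A) = (m : ℝ) / (2 * k) := by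
  set s : Finset (Fin m) := {j | (j : ℕ) < k}
  have hs : #s = k := by simp [s, Fin.card_filter_val_lt, hkm.le]
  have hsc : #sᶜ = m - k := by rw [card_compl, hs, Fintype.card_fin]
  have hs_ne : s.Nonempty := card_pos.mp (hs ▸ hk)
  have hs_le : #s ≤ #sᶜ := by
    rw [hs, hsc]
    exact Nat.le_of_dvd (Nat.sub_pos_of_lt hkm) (Nat.dvd_sub hdvd dvd_rfl)
  have hU : colSpace A = span ℝ {indicatorVec s, indicatorVec sᶜ} :=
    colSpace_eq_span_indicatorVec_compl hn (a := 1 / √k) (b := 1 / √m) (by simp [hk.ne'])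
      (by simp [(hk.trans hkm).ne']) A (fun j i hi => by simp [s, hA1 j i hi]) hA2
  refine ⟨?_, ?_⟩
  · rw [rank_eq_finrank_colSpace, hU,
      finrank_span_indicatorVec_compl hs_ne (card_pos.mp (hs_ne.card_pos.trans_le hs_le))]
  · rw [hU, coherence_span_indicatorVec_compl hs_ne hs_le, hs]
end

section
/- Let A be an m×n valuation matrix of rank r that is μ0-incoherent, with unit-norm nonnegative columns, and fix p ≤ 1 with p ≠ 0. Let y^equal be the equal-split allocation given by y^equal_{j,i} = 1/n for all j ∈ [m], i ∈ [n]. Then every individual satisfies u_i(y^equal) ≥ √m / (n·√(μ0·r)), and consequently GMW_p(y^equal) ≥ √m / (n·√(μ0·r)). -/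
/-!
A column `a` of `A` is a unit vector in the column space `U`, so
`a_j = ⟪P_U e_j, a⟫ ≤ ‖P_U e_j‖ ≤ √(μ0 r / m)` by incoherence. Hence
`1 = ∑ a_j ^ 2 ≤ √(μ0 r / m) ∑ a_j`: every individual values the whole set of items at least
`√m / √(μ0 r)`, and gets a `1/n` share of it under equal split. A `p`-mean is at least the
minimum of its arguments.
-/

open scoped BigOperators

/-- An allocation is feasible if all fractions are nonnegative and each item is
allocated at most once in total. -/
def Feasible {m n : ℕ} (y : Fin m → Fin n → ℝ) : Prop :=
  (∀ j i, 0 ≤ y j i) ∧ ∀ j, ∑ i, y j i ≤ 1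

/-- The (additive) utility of individual `i` under allocation `y`:
`u_i(y) = Σ_j A_{j,i} · y_{j,i}`. -/
noncomputable def util {m n : ℕ} (A : Matrix (Fin m) (Fin n) ℝ)
    (y : Fin m → Fin n → ℝ) (i : Fin n) : ℝ :=
  ∑ j, A j i * y j i

/-- The generalized `p`-mean welfare `GMW_p(y) = ((1/n) Σᵢ uᵢ(y)^p)^{1/p}`
(real powers). -/
noncomputable def GMW {m n : ℕ} (p : ℝ) (A : Matrix (Fin m) (Fin n) ℝ)
    (y : Fin m → Fin n → ℝ) : ℝ :=
  ((1 / (n : ℝ)) * ∑ i, util A y i ^ p) ^ (1 / p)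

open Finset

theorem le_rpow_mean_of_forall_le {ι : Type*} {s : Finset ι} (hs : s.Nonempty) {u : ι → ℝ}
    {c p : ℝ} (hp : p ≠ 0) (hc : 0 ≤ c) (hcu : ∀ i ∈ s, c ≤ u i) :
    c ≤ ((1 / (#s : ℝ)) * ∑ i ∈ s, u i ^ p) ^ (1 / p) := by
  -- Separately, since `0 ^ p = 0` also for `p < 0`.
  rcases hc.eq_or_lt with rfl | hc
  · exact Real.rpow_nonneg (mul_nonneg (by positivity)
      (sum_nonneg fun i hi => Real.rpow_nonneg (hcu i hi) p)) _
  have hcard : (0 : ℝ) < #s := by exact_mod_cast hs.card_pos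
  rw [one_div p, one_div]
  rcases hp.lt_or_gt with hp | hp
  · have hmean : 0 < (#s : ℝ)⁻¹ * ∑ i ∈ s, u i ^ p := mul_pos (inv_pos.mpr hcard)
      (sum_pos (fun i hi => Real.rpow_pos_of_pos (hc.trans_le (hcu i hi)) p) hs)
    rw [Real.le_rpow_inv_iff_of_neg hc hmean hp, inv_mul_le_iff₀ hcard]
    simpa using sum_le_card_nsmul s _ _ fun i hi => Real.rpow_le_rpow_of_nonpos hc (hcu i hi) hp.le
  · have hmean : 0 ≤ (#s : ℝ)⁻¹ * ∑ i ∈ s, u i ^ p := mul_nonneg (by positivity)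
      (sum_nonneg fun i hi => Real.rpow_nonneg (hc.le.trans (hcu i hi)) p)
    rw [Real.le_rpow_inv_iff_of_pos hc.le hmean hp, le_inv_mul_iff₀ hcard]
    simpa using card_nsmul_le_sum s _ _ fun i hi => Real.rpow_le_rpow hc.le (hcu i hi) hp.le

theorem le_mul_sum_of_sum_sq_eq_one {ι : Type*} [Fintype ι] {a : ι → ℝ} {s t : ℝ}
    (ha : ∀ j, 0 ≤ a j) (hsq : ∑ j, a j ^ 2 = 1) (hle : ∀ j, s * a j ≤ t) :
    s ≤ (∑ j, a j) * t :=
  calc s = ∑ j, s * a j * a j := by simp_rw [mul_assoc, ← sq, ← mul_sum, hsq, mul_one]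
    _ ≤ ∑ j, a j * t := sum_le_sum fun j _ =>
      (mul_le_mul_of_nonneg_right (hle j) (ha j)).trans_eq (mul_comm _ _)
    _ = (∑ j, a j) * t := (sum_mul _ _ _).symm

theorem Submodule.abs_apply_le_norm_orthogonalProjectionOnto_single_mul_norm {ι : Type*}
    [Fintype ι] [DecidableEq ι] (U : Submodule ℝ (EuclideanSpace ℝ ι)) {v : EuclideanSpace ℝ ι}
    (hv : v ∈ U) (j : ι) :
    |v j| ≤ ‖U.orthogonalProjectionOnto (EuclideanSpace.single j 1)‖ * ‖v‖ := by
  have hinner :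
      v j = inner ℝ (U.orthogonalProjectionOnto (EuclideanSpace.single j 1)) (⟨v, hv⟩ : U) := by
    rw [inner_orthogonalProjectionOnto_eq_of_mem_right, EuclideanSpace.inner_single_left]
    simp
  rw [hinner]
  exact abs_real_inner_le_norm _ _

theorem mul_norm_orthogonalProjectionOnto_single_sq_le_coherence_mul_finrank {m : ℕ}
    (U : Submodule ℝ (EuclideanSpace ℝ (Fin m))) (j : Fin m) :
    m * ‖U.orthogonalProjectionOnto (EuclideanSpace.single j 1)‖ ^ 2
      ≤ coherence U * Module.finrank ℝ U := by
  rcases (Module.finrank ℝ U).eq_zero_or_pos with hzero | hpos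
  · obtain rfl := Submodule.finrank_eq_zero.mp hzero
    simp [Submodule.orthogonalProjectionOnto_bot]
  have hU : (0 : ℝ) < Module.finrank ℝ U := by exact_mod_cast hpos
  rw [coherence, div_mul_eq_mul_div, div_mul_cancel₀ _ hU.ne']
  gcongr
  exact le_ciSup (f := fun j : Fin m =>
    ‖(U.orthogonalProjectionOnto (EuclideanSpace.single j 1) : EuclideanSpace ℝ (Fin m))‖ ^ 2)
    (Finite.bddAbove_range _) j

theorem finrank_colSpace {m n : ℕ} (A : Matrix (Fin m) (Fin n) ℝ) :
    Module.finrank ℝ (colSpace A) = A.rank := by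
  rw [Matrix.rank_eq_finrank_span_cols, ← LinearEquiv.finrank_map_eq
    (EuclideanSpace.equiv (Fin m) ℝ).toLinearEquiv, colSpace, Submodule.map_span,
    ← Set.range_comp]
  rfl

theorem sqrt_mul_abs_le_of_coherence_le {m n r : ℕ} {μ0 : ℝ} {A : Matrix (Fin m) (Fin n) ℝ}
    (hnorm : ∀ i, ∑ j, A j i ^ 2 = 1) (hrank : A.rank = r) (hinc : coherence (colSpace A) ≤ μ0)
    (j : Fin m) (i : Fin n) :
    √m * |A j i| ≤ √(μ0 * r) := by
  set v := (EuclideanSpace.equiv (Fin m) ℝ).symm fun j => A j i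
  have hv : ‖v‖ = 1 := by simp [v, EuclideanSpace.norm_eq, hnorm i]
  have hentry := (colSpace A).abs_apply_le_norm_orthogonalProjectionOnto_single_mul_norm
    (Submodule.subset_span ⟨i, rfl⟩ : v ∈ colSpace A) j
  rw [hv, mul_one] at hentry
  have hproj := mul_norm_orthogonalProjectionOnto_single_sq_le_coherence_mul_finrank (colSpace A) j
  rw [finrank_colSpace, hrank] at hproj
  calc √m * |A j i| ≤ √m * ‖(colSpace A).orthogonalProjectionOnto (EuclideanSpace.single j 1)‖ :=
        mul_le_mul_of_nonneg_left hentry (Real.sqrt_nonneg _)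
    _ ≤ √(μ0 * r) := by
      refine Real.le_sqrt_of_sq_le ?_
      rw [mul_pow, Real.sq_sqrt m.cast_nonneg]
      exact hproj.trans (mul_le_mul_of_nonneg_right hinc r.cast_nonneg)

theorem util_const {m n : ℕ} (A : Matrix (Fin m) (Fin n) ℝ) (c : ℝ) (i : Fin n) :
    util A (fun _ _ => c) i = (∑ j, A j i) * c := by
  rw [util, sum_mul]

theorem equal_split_lower_bound_general {m n : ℕ} (hn : 0 < n) (r : ℕ) (μ0 : ℝ)
    (A : Matrix (Fin m) (Fin n) ℝ)
    (hA0 : ∀ j i, 0 ≤ A j i) (hnorm : ∀ i, ∑ j, (A j i) ^ 2 = 1)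
    (hrank : A.rank = r) (hinc : coherence (colSpace A) ≤ μ0)
    (p : ℝ) (hp0 : p ≠ 0) :
    (∀ i : Fin n,
      Real.sqrt m / ((n : ℝ) * Real.sqrt (μ0 * r)) ≤ util A (fun _ _ => 1 / (n : ℝ)) i) ∧
    Real.sqrt m / ((n : ℝ) * Real.sqrt (μ0 * r)) ≤ GMW p A (fun _ _ => 1 / (n : ℝ)) := by
  have hutil (i : Fin n) :
      √m / (n * √(μ0 * r)) ≤ util A (fun _ _ => 1 / (n : ℝ)) i := by
    have hcol : √m ≤ (∑ j, A j i) * √(μ0 * r) :=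
      le_mul_sum_of_sum_sq_eq_one (hA0 · i) (hnorm i) fun j => by
        simpa [abs_of_nonneg (hA0 j i)] using sqrt_mul_abs_le_of_coherence_le hnorm hrank hinc j i
    rw [util_const, mul_comm (n : ℝ), ← div_div, ← div_eq_mul_one_div]
    gcongr
    exact div_le_of_le_mul₀ (Real.sqrt_nonneg _) (sum_nonneg fun j _ => hA0 j i) hcol
  refine ⟨hutil, ?_⟩
  simpa [GMW] using le_rpow_mean_of_forall_le ⟨⟨0, hn⟩, mem_univ _⟩ hp0 (by positivity)
    fun i _ => hutil i

/-- For a rank-`r`, `μ0`-incoherent valuation matrix with nonnegative unit-norm columns and any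
`p ≤ 1`, `p ≠ 0`, under the equal-split allocation `y^equal_{j,i} = 1/n` every individual gets
utility at least `√m/(n·√(μ0·r))`, and hence `GMW_p(y^equal) ≥ √m/(n·√(μ0·r))`. -/
theorem equal_split_lower_bound {m n : ℕ} (hm : 0 < m) (hn : 0 < n) (r : ℕ) (μ0 : ℝ)
    (A : Matrix (Fin m) (Fin n) ℝ)
    (hA0 : ∀ j i, 0 ≤ A j i) (hnorm : ∀ i, ∑ j, (A j i) ^ 2 = 1)
    (hrank : A.rank = r) (hinc : coherence (colSpace A) ≤ μ0)
    (p : ℝ) (hp1 : p ≤ 1) (hp0 : p ≠ 0) :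
    (∀ i : Fin n,
      Real.sqrt m / ((n : ℝ) * Real.sqrt (μ0 * r)) ≤ util A (fun _ _ => 1 / (n : ℝ)) i) ∧
    Real.sqrt m / ((n : ℝ) * Real.sqrt (μ0 * r)) ≤ GMW p A (fun _ _ => 1 / (n : ℝ)) :=
  equal_split_lower_bound_general hn r μ0 A hA0 hnorm hrank hinc p hp0
end
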